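/- arXiv:2309.00440 — 5 statements merged into one kernel-verified Lean document; each statement's English description precedes it below -/
import Mathlib

section
/- Let $l \geq 1$ and $\alpha \geq 0$ be natural numbers and let $q$ be a positive odd integer with $q < 2^{l-\alpha-1}$. Let $c$ be an integer with $-q\cdot 2^{l+\alpha} < c < 2^{2l} - q\cdot 2^{l+\alpha}$, and let $p, p_1, p_0$ be integers such that $p\cdot q \equiv c \pmod{2^{2l}}$, $p = 2^l\cdot p_1 + p_0$, and either ($c \geq 0$ and $0 \leq p_0 < 2^l$) or ($c < 0$ and $-2^l < p_0 \leq 0$). Then the integer $r := \lfloor (p_1 + 2^{\alpha})\cdot q / 2^l \rfloor$ equals $(p\cdot q - c)/2^{2l}$; in particular $2^{2l}\cdot r \equiv -c \pmod{q}$. -/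
/-- Congruence part of Theorem 1 (correctness of the Plantard multiplication
with enlarged input range). `c` plays the role of the product `a*b`, and `p`
plays the role of `a*b*q⁻¹ mod± 2^(2l)`. Division `/` on `ℤ` is Euclidean
division, which agrees with floor division since the divisors `2^l`, `2^(2l)`
are positive. -/
theorem plantard_enlarged_congruence
    (l α : ℕ) (hl : 1 ≤ l) (hαl : α + 1 ≤ l)
    (q : ℤ) (hq_pos : 0 < q) (hq_odd : Odd q) (hq_lt : q < 2 ^ (l - α - 1))
    (c : ℤ) (hc_lo : -(q * 2 ^ (l + α)) < c) (hc_hi : c < 2 ^ (2 * l) - q * 2 ^ (l + α))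
    (p p1 p0 : ℤ)
    (hp_cong : p * q ≡ c [ZMOD (2 ^ (2 * l))])
    (hp_split : p = 2 ^ l * p1 + p0)
    (hsign : (0 ≤ c ∧ 0 ≤ p0 ∧ p0 < 2 ^ l) ∨ (c < 0 ∧ -(2 ^ l) < p0 ∧ p0 ≤ 0)) :
    (p1 + 2 ^ α) * q / 2 ^ l = (p * q - c) / 2 ^ (2 * l) ∧
      (2 ^ (2 * l) : ℤ) * ((p1 + 2 ^ α) * q / 2 ^ l) ≡ -c [ZMOD q] := by
  have h2lpos : (0:ℤ) < 2 ^ l := by positivity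
  have h2l2 : (2:ℤ) ^ (2*l) = 2 ^ l * 2 ^ l := by rw [two_mul, pow_add]
  have hla : (2:ℤ) ^ (l+α) = 2 ^ l * 2 ^ α := pow_add 2 l α
  have hmono : (2:ℤ) ^ l ≤ 2 ^ (l+α) :=
    pow_le_pow_right₀ (by norm_num) (Nat.le_add_right l α)
  obtain ⟨k, hk⟩ := (hp_cong.symm).dvd
  set s : ℤ := c - p0 * q + 2 ^ (l + α) * q with hs
  have hkey : 2 ^ l * ((p1 + 2 ^ α) * q) = 2 ^ (2*l) * k + s := by
    linear_combination hk - q * hp_split + k * h2l2 + q * hla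
  have hs_lo : 0 ≤ s := by
    rcases hsign with ⟨hc, hp0, hp0'⟩ | ⟨hc, hp0, hp0'⟩
    · nlinarith [mul_le_mul_of_nonneg_right hmono hq_pos.le,
        mul_lt_mul_of_pos_right hp0' hq_pos]
    · nlinarith [mul_nonneg (neg_nonneg.mpr hp0') hq_pos.le]
  have hs_hi : s < 2 ^ (2*l) := by
    rcases hsign with ⟨hc, hp0, hp0'⟩ | ⟨hc, hp0, hp0'⟩
    · nlinarith [mul_nonneg hp0 hq_pos.le]
    · have hpow : (2:ℤ) ^ (l+α+1) * 2 ^ (l-α-1) = 2 ^ (2*l) := by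
        rw [← pow_add]; congr 1; omega
      have h1 : -p0 * q < 2 ^ l * q := by
        apply mul_lt_mul_of_pos_right (by linarith) hq_pos
      have h2 : (2:ℤ) ^ l * q ≤ 2 ^ (l+α) * q :=
        mul_le_mul_of_nonneg_right hmono hq_pos.le
      have h3 : (2:ℤ) ^ (l+α+1) * q < 2 ^ (l+α+1) * 2 ^ (l-α-1) :=
        mul_lt_mul_of_pos_left hq_lt (by positivity)
      have h4 : (2:ℤ) ^ (l+α+1) = 2 ^ (l+α) * 2 := pow_succ 2 (l+α)
      nlinarith
  have hr : (p1 + 2 ^ α) * q / 2 ^ l = k := by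
    have h1 : (p1 + 2 ^ α) * q / 2 ^ l
        = (2 ^ l * ((p1 + 2 ^ α) * q)) / (2 ^ l * 2 ^ l) :=
      (Int.mul_ediv_mul_of_pos _ _ h2lpos).symm
    rw [h1, ← h2l2, hkey, add_comm,
      Int.add_mul_ediv_left _ _ (by positivity : (2:ℤ) ^ (2*l) ≠ 0),
      Int.ediv_eq_zero_of_lt hs_lo hs_hi, zero_add]
  constructor
  · rw [hr, hk, Int.mul_ediv_cancel_left _ (by positivity)]
  · rw [hr, show (2:ℤ) ^ (2*l) * k = p * q - c from hk.symm]
    exact Int.modEq_iff_dvd.mpr ⟨-p, by ring⟩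
end

section
/- Let $l \geq 1$ and $\alpha \geq 0$ be natural numbers and let $q$ be a positive integer with $q < 2^{l-\alpha-1}$. Let $c$ and $p_0$ be integers with $c < 0$, $-2^l < p_0 \leq 0$, and $c > -q\cdot 2^{l+\alpha}$. Then $0 < q\cdot 2^{l+\alpha} - p_0\cdot q + c < 2^{2l}$. -/
/-- Negative case of condition (iii) in the proof of Theorem 1: the key
inequality for the Plantard multiplication with enlarged input range. `c`
plays the role of the product `a*b` and `p0` the low `l`-bit word of
`a*b*q⁻¹ mod± 2^(2l)`. -/
theorem plantard_condition_iii_neg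
    (l α : ℕ) (hl : 1 ≤ l) (hαl : α + 1 ≤ l)
    (q : ℤ) (hq_pos : 0 < q) (hq_lt : q < 2 ^ (l - α - 1))
    (c p0 : ℤ) (hc_neg : c < 0)
    (hp0_lo : -(2 ^ l) < p0) (hp0_hi : p0 ≤ 0)
    (hc_lo : -(q * 2 ^ (l + α)) < c) :
    0 < q * 2 ^ (l + α) - p0 * q + c ∧ q * 2 ^ (l + α) - p0 * q + c < 2 ^ (2 * l) := by
  obtain ⟨k, hk⟩ : ∃ k, l = k + α + 1 := ⟨l - α - 1, by omega⟩
  have hk' : l - α - 1 = k := by omega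
  rw [hk'] at hq_lt
  subst hk
  have e1 : (2 : ℤ) ^ (k + α + 1 + α) = 2 ^ (k + α + 1) * 2 ^ α := by ring
  have e2 : (2 : ℤ) ^ (2 * (k + α + 1)) = 2 ^ k * (2 ^ (k + α + 1) * 2 ^ α) * 2 := by ring
  have hpk : (0:ℤ) < 2 ^ k := by positivity
  have hpl : (0:ℤ) < 2 ^ (k + α + 1) := by positivity
  have hpa : (1:ℤ) ≤ 2 ^ α := by exact one_le_pow₀ one_le_two
  constructor
  · nlinarith [mul_nonneg (neg_nonneg.2 hp0_hi) hq_pos.le]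
  · rw [e2, e1]
    nlinarith [mul_lt_mul_of_pos_right hq_lt hpl, mul_lt_mul_of_pos_right hp0_lo hq_pos,
      mul_le_mul_of_nonneg_left hpa (mul_pos hpk hpl).le]
end

section
/- Let $l \geq 1$ and $\alpha \geq 0$ be natural numbers and let $q$ be a positive integer. Let $c, p, p_1, p_0$ be integers such that $p\cdot q \equiv c \pmod{2^{2l}}$, $p = 2^l\cdot p_1 + p_0$, and $0 < q\cdot 2^{l+\alpha} - p_0\cdot q + c < 2^{2l}$. Then $\lfloor (p_1 + 2^{\alpha})\cdot q / 2^l \rfloor = (p\cdot q - c)/2^{2l}$. -/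
/-- Exactness identity from the end of the proof of Theorem 1: under the key
inequality of condition (iii), the two nested floor divisions by `2^l` in the
Plantard multiplication produce exactly the integer `(p*q - c)/2^(2l)`.
Division `/` on `ℤ` is Euclidean division, which agrees with floor division
since the divisors `2^l`, `2^(2l)` are positive. -/
theorem plantard_exact_quotient
    (l α : ℕ) (hl : 1 ≤ l)
    (q : ℤ) (hq_pos : 0 < q)
    (c p p1 p0 : ℤ)
    (hp_cong : p * q ≡ c [ZMOD (2 ^ (2 * l))])
    (hp_split : p = 2 ^ l * p1 + p0)
    (hkey_lo : 0 < q * 2 ^ (l + α) - p0 * q + c)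
    (hkey_hi : q * 2 ^ (l + α) - p0 * q + c < 2 ^ (2 * l)) :
    (p1 + 2 ^ α) * q / 2 ^ l = (p * q - c) / 2 ^ (2 * l) := by
  have hpow : (0:ℤ) < 2 ^ l := by positivity
  have hdvd : (2 ^ (2 * l) : ℤ) ∣ (p * q - c) := by
    have := (Int.ModEq.dvd hp_cong)
    exact (dvd_sub_comm).mp this
  obtain ⟨k, hk⟩ := hdvd
  set r : ℤ := q * 2 ^ (l + α) - p0 * q + c with hr
  have hmain : 2 ^ l * ((p1 + 2 ^ α) * q) = 2 ^ (2 * l) * k + r := by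
    rw [← hk, hp_split, hr, pow_add]
    ring
  have hdvd2 : (2 ^ l : ℤ) ∣ r := by
    have : r = 2 ^ l * ((p1 + 2 ^ α) * q) - 2 ^ (2 * l) * k := by omega
    rw [this, two_mul, pow_add]
    exact dvd_sub ⟨(p1 + 2 ^ α) * q, rfl⟩ ⟨2 ^ l * k, by ring⟩
  obtain ⟨s, hs⟩ := hdvd2
  have hA : (p1 + 2 ^ α) * q = s + k * 2 ^ l := by
    have h2 : 2 ^ l * ((p1 + 2 ^ α) * q) = 2 ^ l * (s + k * 2 ^ l) := by
      rw [hmain, hs, two_mul, pow_add]; ring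
    exact mul_left_cancel₀ (ne_of_gt hpow) h2
  have hs_lo : 0 ≤ s := by
    nlinarith [hkey_lo, hs]
  have hs_hi : s < 2 ^ l := by
    have : (2:ℤ) ^ (2*l) = 2 ^ l * 2 ^ l := by rw [two_mul, pow_add]
    nlinarith [hkey_hi, hs]
  rw [hA, hk, Int.add_mul_ediv_right _ _ (ne_of_gt hpow),
    Int.ediv_eq_zero_of_lt hs_lo hs_hi, Int.mul_ediv_cancel_left _ (by positivity), zero_add]
end

section
/- Let $l \geq 1$ and $\alpha \geq 0$ be natural numbers and let $q$ be a positive odd integer with $q < 2^{l-\alpha-1}$. Let $p$ and $c$ be integers with $-2^{2l-1} \leq p < 2^{2l-1}$, $|c| \leq q^2\cdot 2^{2\alpha}$, and $2^{2l} \mid p\cdot q - c$. Then the integer $r := (p\cdot q - c)/2^{2l}$ satisfies $-q/2 < r < q/2$. -/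
/-- Output-range claim (condition (i)) of the Plantard multiplication: when the
intermediate value `p = a*b*q⁻¹ mod± 2^(2l)` is a centered representative in
`[-2^(2l-1), 2^(2l-1))` and the product `c = a*b` lies in the admissible range
`[-q^2*2^(2α), q^2*2^(2α)]`, the exact quotient `(p*q - c)/2^(2l)` lies
strictly between `-q/2` and `q/2`. -/
theorem plantard_output_range
    (l α : ℕ) (hl : 1 ≤ l) (hαl : α + 1 ≤ l)
    (q : ℤ) (hq_pos : 0 < q) (hq_odd : Odd q) (hq_lt : q < 2 ^ (l - α - 1))
    (p c : ℤ)
    (hp_lo : -(2 ^ (2 * l - 1)) ≤ p) (hp_hi : p < 2 ^ (2 * l - 1))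
    (hc : |c| ≤ q ^ 2 * 2 ^ (2 * α))
    (hdvd : (2 ^ (2 * l) : ℤ) ∣ p * q - c) :
    -(q : ℚ) / 2 < (((p * q - c) / 2 ^ (2 * l) : ℤ) : ℚ) ∧
      (((p * q - c) / 2 ^ (2 * l) : ℤ) : ℚ) < (q : ℚ) / 2 := by
  obtain ⟨r, hr⟩ := hdvd
  have h2l : ((2 : ℤ) ^ (2 * l)) ≠ 0 := by positivity
  have hdiv : (p * q - c) / 2 ^ (2 * l) = r := by
    rw [hr, Int.mul_ediv_cancel_left _ h2l]
  set K : ℤ := 2 ^ (2 * l - 2) with hK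
  have hKpos : (0 : ℤ) < K := by positivity
  have e1 : (2 : ℤ) ^ (2 * l) = 4 * K := by
    have h : 2 * l = 2 + (2 * l - 2) := by omega
    rw [hK, h, pow_add]; norm_num
  have e2 : (2 : ℤ) ^ (2 * l - 1) = 2 * K := by
    have h : 2 * l - 1 = 1 + (2 * l - 2) := by omega
    rw [hK, h, pow_add]; norm_num
  have hq2 : q ^ 2 * 2 ^ (2 * α) < K := by
    have h1 : q ^ 2 < 2 ^ ((l - α - 1) * 2) := by
      rw [pow_mul]
      exact pow_lt_pow_left₀ hq_lt hq_pos.le (by norm_num)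
    have h2 : (2 : ℤ) ^ ((l - α - 1) * 2) * 2 ^ (2 * α) = K := by
      rw [hK, ← pow_add]
      congr 1
      omega
    calc q ^ 2 * 2 ^ (2 * α) < 2 ^ ((l - α - 1) * 2) * 2 ^ (2 * α) := by
          have h3 : (0 : ℤ) < 2 ^ (2 * α) := by positivity
          exact mul_lt_mul_of_pos_right h1 h3
      _ = K := h2
  have habs := abs_le.mp hc
  rw [e2] at hp_lo hp_hi
  rw [e1] at hr
  -- upper bound: 4*K*r < (2*q+1)*K
  have hpq_hi : p * q ≤ (2 * K - 1) * q :=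
    mul_le_mul_of_nonneg_right (by omega) hq_pos.le
  have hpq_lo : (-(2 * K)) * q ≤ p * q :=
    mul_le_mul_of_nonneg_right hp_lo hq_pos.le
  have hub : (4 * r) * K < (2 * q + 1) * K := by nlinarith
  have hlb : (-(2 * q) - 1) * K < (4 * r) * K := by nlinarith
  have hub' : 4 * r < 2 * q + 1 := lt_of_mul_lt_mul_right hub hKpos.le
  have hlb' : -(2 * q) - 1 < 4 * r := lt_of_mul_lt_mul_right hlb hKpos.le
  obtain ⟨k, hk⟩ := hq_odd
  have h2r_lt : 2 * r < q := by omega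
  have h2r_gt : -q < 2 * r := by omega
  rw [hdiv]
  constructor
  · have h := (Int.cast_lt (R := ℚ)).mpr h2r_gt
    push_cast at h
    linarith
  · have h := (Int.cast_lt (R := ℚ)).mpr h2r_lt
    push_cast at h
    linarith
end

section
/- Let $l \geq 1$ and $\alpha \geq 1$ be natural numbers and let $q$ be a positive odd integer with $q < 2^{l-\alpha-1}$. Let $q'$ be the unique integer in $[-2^{2l-1}, 2^{2l-1})$ with $q\cdot q' \equiv 1 \pmod{2^{2l}}$. Let $a$ and $b$ be integers with $|a| \leq q\cdot 2^{\alpha}$ and $|b| \leq q\cdot 2^{\alpha}$. Let $p$ be the unique integer in $[-2^{2l-1}, 2^{2l-1})$ with $p \equiv a\cdot b\cdot q' \pmod{2^{2l}}$, and set $r := \lfloor (\lfloor p/2^l \rfloor + 2^{\alpha})\cdot q / 2^l \rfloor$. Then $2^{2l}\cdot r \equiv -a\cdot b \pmod{q}$ and $-q/2 < r < q/2$. -/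
private lemma plantard_aux_up (d X ab P S t : ℤ) (hd : 0 < d) (hX : 0 ≤ X)
    (h1 : 2 * X + 4 ≤ d) (hab : ab ≤ X * X) (hP : 0 ≤ P) (hS : 0 ≤ S)
    (ht : d * d * t = ab - P + d * X - S) : t < 1 := by
  have h2 : X * (2 * X + 4) ≤ X * d := mul_le_mul_of_nonneg_left h1 hX
  have h3 : d * (2 * X + 4) ≤ d * d := mul_le_mul_of_nonneg_left h1 hd.le
  have h4 : d * d * t < d * d * 1 := by nlinarith [h2, h3, hab, hP, hS, ht, hd]
  exact lt_of_mul_lt_mul_left h4 (by positivity)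

private lemma plantard_aux_lo (d X ab P S t : ℤ) (hd : 0 < d) (hX : 0 ≤ X)
    (h1 : 2 * X + 4 ≤ d) (hab : -(X * X) ≤ ab) (hP : 2 * P ≤ d * X)
    (hS : S ≤ d * (d - 1))
    (ht : d * d * t = ab - P + d * X - S) : -1 < t := by
  have h2 : (2 * X) * X ≤ d * X := mul_le_mul_of_nonneg_right (by linarith) hX
  have h4 : d * d * (-1) < d * d * t := by nlinarith [h2, hab, hP, hS, ht, hd]
  exact lt_of_mul_lt_mul_left h4 (by positivity)

private lemma plantard_aux_m (H X q p ab m : ℤ) (hH : 0 < H) (hq : 0 < q)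
    (hXH : 2 * (X * X) ≤ H) (hp_lo : -H ≤ p) (hp_hi : p ≤ H - 1)
    (hab_lo : -(X * X) ≤ ab) (hab_hi : ab ≤ X * X)
    (hm : 2 * H * m = q * p - ab) : -q ≤ 2 * m ∧ 2 * m ≤ q := by
  have e1 : q * p ≤ q * (H - 1) := mul_le_mul_of_nonneg_left hp_hi hq.le
  have e2 : q * (-H) ≤ q * p := mul_le_mul_of_nonneg_left hp_lo hq.le
  constructor
  · have h5 : 2 * H * (-(q + 1)) < 2 * H * (2 * m) := by nlinarith [e1, e2, hm, hXH, hab_hi, hH, hq]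
    have := lt_of_mul_lt_mul_left h5 (by positivity)
    omega
  · have h5 : 2 * H * (2 * m) < 2 * H * (q + 1) := by nlinarith [e1, e2, hm, hXH, hab_lo, hH, hq]
    have := lt_of_mul_lt_mul_left h5 (by positivity)
    omega

/-- Correctness of the signed Plantard multiplication (Algorithm 2, from Huang
et al., TCHES 2022): for signed inputs `a, b ∈ [-q*2^α, q*2^α]` it computes
`r = a*b*(-2^(-2l)) mod± q` with output in `(-q/2, q/2)`. Division `/` on `ℤ`
is Euclidean division, which agrees with floor division (arithmetic right
shift) since the divisor `2^l` is positive. -/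
theorem plantard_signed_mul_correct
    (l α : ℕ) (hl : 1 ≤ l) (hα : 1 ≤ α) (hαl : α + 1 ≤ l)
    (q : ℤ) (hq_pos : 0 < q) (hq_odd : Odd q) (hq_lt : q < 2 ^ (l - α - 1))
    (q' : ℤ) (hq'_lo : -(2 ^ (2 * l - 1)) ≤ q') (hq'_hi : q' < 2 ^ (2 * l - 1))
    (hq'_inv : q * q' ≡ 1 [ZMOD (2 ^ (2 * l))])
    (a b : ℤ) (ha : |a| ≤ q * 2 ^ α) (hb : |b| ≤ q * 2 ^ α)
    (p : ℤ) (hp_lo : -(2 ^ (2 * l - 1)) ≤ p) (hp_hi : p < 2 ^ (2 * l - 1))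
    (hp_cong : p ≡ a * b * q' [ZMOD (2 ^ (2 * l))])
    (r : ℤ) (hr : r = (p / 2 ^ l + 2 ^ α) * q / 2 ^ l) :
    (2 ^ (2 * l) : ℤ) * r ≡ -(a * b) [ZMOD q] ∧
      -(q : ℚ) / 2 < (r : ℚ) ∧ (r : ℚ) < (q : ℚ) / 2 := by
  have hβ : l = (l - α - 1) + α + 1 := by omega
  set Q : ℤ := 2 ^ (l - α - 1) with hQdef
  set A : ℤ := 2 ^ α with hAdef
  have hQpos : 0 < Q := by positivity
  have hApos : 0 < A := by positivity
  have hA2 : 2 ≤ A := by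
    calc (2:ℤ) = 2 ^ 1 := by norm_num
    _ ≤ 2 ^ α := pow_le_pow_right₀ (by norm_num) hα
  have hqQ : q + 1 ≤ Q := Int.lt_iff_add_one_le.mp hq_lt
  have hd : (2:ℤ) ^ l = 2 * Q * A := by
    rw [hβ, pow_add, pow_add, pow_one]; ring
  have hD : (2:ℤ) ^ (2 * l) = 2 ^ l * 2 ^ l := by rw [two_mul, pow_add]
  have hH : (2:ℤ) ^ (2 * l - 1) = 2 * (Q * Q) * (A * A) := by
    have h1 : 2 * l - 1 = ((l - α - 1) + (l - α - 1)) + (α + α) + 1 := by omega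
    rw [h1, pow_add, pow_add, pow_add, pow_add, pow_one]; ring
  have hdpos : (0:ℤ) < 2 ^ l := by positivity
  have hDpos : (0:ℤ) < 2 ^ (2 * l) := by positivity
  have hHpos : (0:ℤ) < 2 ^ (2 * l - 1) := by positivity
  -- key size facts
  have hX0 : (0:ℤ) ≤ q * A := by positivity
  have hXd : 2 * (q * A) + 4 ≤ 2 ^ l := by
    have t1 : (q + 1) * A ≤ Q * A := mul_le_mul_of_nonneg_right hqQ hApos.le
    rw [hd]
    calc 2 * (q * A) + 4 ≤ 2 * (q * A) + 2 * A := by linarith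
    _ = 2 * ((q + 1) * A) := by ring
    _ ≤ 2 * (Q * A) := by linarith
    _ = 2 * Q * A := by ring
  have hXH : 2 * ((q * A) * (q * A)) ≤ 2 ^ (2 * l - 1) := by
    have t1 : q * A ≤ (Q - 1) * A := mul_le_mul_of_nonneg_right (by linarith) hApos.le
    have t0 : (0:ℤ) ≤ (Q - 1) * A := mul_nonneg (by linarith) hApos.le
    have t2 : (q * A) * (q * A) ≤ ((Q - 1) * A) * ((Q - 1) * A) :=
      mul_le_mul t1 t1 hX0 t0
    have t4 : (Q - 1) * A ≤ Q * A := mul_le_mul_of_nonneg_right (by linarith) hApos.le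
    have t3 : ((Q - 1) * A) * ((Q - 1) * A) ≤ (Q * A) * (Q * A) :=
      mul_le_mul t4 t4 t0 (by positivity)
    rw [hH]
    calc 2 * ((q * A) * (q * A)) ≤ 2 * (((Q - 1) * A) * ((Q - 1) * A)) := by linarith
    _ ≤ 2 * ((Q * A) * (Q * A)) := by linarith
    _ = 2 * (Q * Q) * (A * A) := by ring
  -- divisibility: 2^(2l) ∣ q*p - a*b
  have h1 : (2:ℤ) ^ (2 * l) ∣ a * b * q' - p := (Int.modEq_iff_dvd).mp hp_cong
  have h2 : (2:ℤ) ^ (2 * l) ∣ 1 - q * q' := (Int.modEq_iff_dvd).mp hq'_inv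
  have hdvd : (2:ℤ) ^ (2 * l) ∣ q * p - a * b := by
    have h3 : (2:ℤ) ^ (2 * l) ∣ q * (a * b * q' - p) + (a * b) * (1 - q * q') :=
      dvd_add (h1.mul_left q) (h2.mul_left (a * b))
    have h4 : q * (a * b * q' - p) + (a * b) * (1 - q * q') = -(q * p - a * b) := by
      ring
    rw [h4] at h3
    exact dvd_neg.mp h3
  obtain ⟨m, hm⟩ := hdvd
  -- division facts
  have hp_eq := Int.mul_ediv_add_emod p (2 ^ l)
  have hp0_nonneg : 0 ≤ p % 2 ^ l := Int.emod_nonneg p (by positivity)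
  have hp0_lt : p % 2 ^ l < 2 ^ l := Int.emod_lt_of_pos p hdpos
  have ht_eq := Int.mul_ediv_add_emod ((p / 2 ^ l + A) * q) (2 ^ l)
  have hs_nonneg : 0 ≤ (p / 2 ^ l + A) * q % 2 ^ l := Int.emod_nonneg _ (by positivity)
  have hs_lt : (p / 2 ^ l + A) * q % 2 ^ l < 2 ^ l := Int.emod_lt_of_pos _ hdpos
  set p0 : ℤ := p % 2 ^ l with hp0def
  set s : ℤ := (p / 2 ^ l + A) * q % 2 ^ l with hsdef
  -- master equation
  have key : (2 ^ l) * (2 ^ l) * (r - m) =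
      a * b - p0 * q + 2 ^ l * (q * A) - 2 ^ l * s := by
    rw [hr, ← hD]
    linear_combination (2:ℤ) ^ l * ht_eq + q * hp_eq + hm
  -- bound on a*b
  have hab : |a * b| ≤ q * A * (q * A) := by
    rw [abs_mul]
    exact mul_le_mul ha hb (abs_nonneg b) (by positivity)
  have hab_lo : -(q * A * (q * A)) ≤ a * b := (abs_le.mp hab).1
  have hab_hi : a * b ≤ q * A * (q * A) := (abs_le.mp hab).2
  -- auxiliary product bounds
  have hPb : 2 * (p0 * q) ≤ 2 ^ l * (q * A) := by
    have u1 : p0 * q ≤ 2 ^ l * q := mul_le_mul_of_nonneg_right (by linarith) hq_pos.le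
    have u2 : 2 ^ l * (q * 2) ≤ 2 ^ l * (q * A) :=
      mul_le_mul_of_nonneg_left (mul_le_mul_of_nonneg_left hA2 hq_pos.le) hdpos.le
    linarith
  have hSb : 2 ^ l * s ≤ 2 ^ l * (2 ^ l - 1) :=
    mul_le_mul_of_nonneg_left (by linarith) hdpos.le
  -- r = m
  have hup : r - m < 1 :=
    plantard_aux_up (2 ^ l) (q * A) (a * b) (p0 * q) (2 ^ l * s) (r - m)
      hdpos hX0 hXd hab_hi (mul_nonneg hp0_nonneg hq_pos.le)
      (mul_nonneg hdpos.le hs_nonneg) key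
  have hlo : -1 < r - m :=
    plantard_aux_lo (2 ^ l) (q * A) (a * b) (p0 * q) (2 ^ l * s) (r - m)
      hdpos hX0 hXd hab_lo hPb hSb key
  have hrm : r = m := by omega
  -- bounds on m
  have hDH : (2:ℤ) ^ (2 * l) = 2 * 2 ^ (2 * l - 1) := by
    rw [← pow_succ']; congr 1; omega
  have hmb : -q ≤ 2 * m ∧ 2 * m ≤ q :=
    plantard_aux_m (2 ^ (2 * l - 1)) (q * A) q p (a * b) m
      hHpos hq_pos hXH hp_lo (by linarith) hab_lo hab_hi
      (by rw [hDH] at hm; linarith)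
  obtain ⟨k, hk⟩ := hq_odd
  have hm_hi' : 2 * m ≤ q - 1 := by omega
  have hm_lo' : -(q - 1) ≤ 2 * m := by omega
  refine ⟨?_, ?_, ?_⟩
  · rw [Int.modEq_iff_dvd, hrm, ← hm]
    exact ⟨-p, by ring⟩
  · have h6 : -(q - 1) ≤ 2 * r := by rw [hrm]; exact hm_lo'
    have h7 : ((-(q - 1) : ℤ) : ℚ) ≤ ((2 * r : ℤ) : ℚ) := by exact_mod_cast h6
    push_cast at h7
    have hq' : (0:ℚ) < q := by exact_mod_cast hq_pos
    linarith
  · have h6 : 2 * r ≤ q - 1 := by rw [hrm]; exact hm_hi'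
    have h7 : ((2 * r : ℤ) : ℚ) ≤ ((q - 1 : ℤ) : ℚ) := by exact_mod_cast h6
    push_cast at h7
    have hq' : (0:ℚ) < q := by exact_mod_cast hq_pos
    linarith
end
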